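/- Let Ω ⊂ ℝ³ be measurable with finite Lebesgue measure, M > 0, and let W : M^{3×3} → [0,+∞] satisfy: W is finite-valued and of class C¹ on M^{3×3}_+; W ≥ 0 everywhere and W(Id) = 0; W is finite-valued and of class C² on the open δ-neighbourhood of SO(3) for some δ > 0; and |DW(F)Fᵀ| ≤ k(W(F)+1) for every F ∈ M^{3×3}_+, for some k > 0. Let t_h → 0⁺ with t_h ∈ (0,1], let s_h ∈ (0,1] with t_h/s_h → 0, and let G_h : Ω → M^{3×3} be measurable with det(Id + t_h G_h(x)) > 0 for a.e. x, ‖G_h‖_{L²(Ω)} ≤ M and ∫_Ω W(Id + t_h G_h) dx ≤ M t_h². Set B_h := {x ∈ Ω : t_h|G_h(x)| ≤ s_h} and E_h := t_h⁻¹ DW(Id + t_h G_h)(Id + t_h G_h)ᵀ. Then |Ω \ B_h| ≤ M²(t_h/s_h)², and there is a constant C > 0 (depending only on W and M) such that ∫_{Ω\B_h} |E_h| dx ≤ C t_h/s_h; in particular the functions 1_{Ω\B_h} E_h converge to 0 strongly in L¹(Ω; M^{3×3}) as h → 0. -/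

import Mathlib

/-!
Split `Ω \ B_h = {s_h < t_h |G_h|}` at a fixed small radius `ρ`. Where `t_h |G_h| ≤ ρ`, the matrix
`F = Id + t_h G_h` is close to `Id`, at which `W ≥ 0` is minimal and `C²`; hence
`|DW(F)| ≲ |F - Id| ≤ t_h |G_h|`, so `|E_h| ≲ |G_h| ≤ (t_h / s_h) |G_h|²`, whose integral is
`≲ M² t_h / s_h`. Where `t_h |G_h| > ρ`, the growth condition gives `|E_h| ≤ k t_h⁻¹ (W(F) + 1)`, and
the energy bound with Chebyshev's inequality `|{t_h |G_h| > ρ}| ≤ M² t_h² / ρ²` makes the integral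
`≲ t_h ≤ t_h / s_h`. The bound on `|Ω \ B_h|` is Chebyshev's inequality as well.
-/

open Matrix MeasureTheory Filter Topology
open scoped ENNReal

noncomputable section

attribute [local instance] Matrix.normedAddCommGroup Matrix.normedSpace

/-- The Frobenius inner product `A : B = tr (Aᵀ B) = ∑ᵢⱼ Aᵢⱼ Bᵢⱼ`. -/
def frobInner {n : ℕ} (A B : Matrix (Fin n) (Fin n) ℝ) : ℝ := ∑ i, ∑ j, A i j * B i j

/-- The Frobenius norm `|A| = (A : A)^{1/2}`. -/
def frobNorm {n : ℕ} (A : Matrix (Fin n) (Fin n) ℝ) : ℝ := Real.sqrt (frobInner A A)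

/-- The gradient of a function on 3×3 matrices with respect to the Frobenius
inner product: `(DW F)ᵢⱼ = ∂W/∂Fᵢⱼ`. -/
def matGrad (w : Matrix (Fin 3) (Fin 3) ℝ → ℝ) (F : Matrix (Fin 3) (Fin 3) ℝ) :
    Matrix (Fin 3) (Fin 3) ℝ :=
  fun i j => fderiv ℝ w F (Matrix.single i j 1)

/-- The set of proper rotations SO(3). -/
def SO3 : Set (Matrix (Fin 3) (Fin 3) ℝ) := {R | Rᵀ * R = 1 ∧ R.det = 1}

/-- The real-valued function associated to an extended-real-valued energy density. -/
def wr (W : Matrix (Fin 3) (Fin 3) ℝ → ℝ≥0∞) : Matrix (Fin 3) (Fin 3) ℝ → ℝ :=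
  fun F => (W F).toReal

/-- The Frobenius distance from a matrix to SO(3). -/
def distSO3 (F : Matrix (Fin 3) (Fin 3) ℝ) : ℝ :=
  sInf ((fun R => frobNorm (F - R)) '' SO3)

-- `‖·‖` on matrices is the entrywise sup norm of the local instance, `frobNorm` the Frobenius norm.
section MatrixNorms

variable {n : ℕ}

theorem frobNorm_nonneg (A : Matrix (Fin n) (Fin n) ℝ) : 0 ≤ frobNorm A :=
  Real.sqrt_nonneg _

theorem frobNorm_smul (c : ℝ) (A : Matrix (Fin n) (Fin n) ℝ) :
    frobNorm (c • A) = |c| * frobNorm A := by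
  have h : frobInner (c • A) (c • A) = c ^ 2 * frobInner A A := by
    simp only [frobInner, Matrix.smul_apply, smul_eq_mul, Finset.mul_sum]
    exact Finset.sum_congr rfl fun i _ => Finset.sum_congr rfl fun j _ => by ring
  rw [frobNorm, h, Real.sqrt_mul (sq_nonneg c), Real.sqrt_sq_eq_abs, frobNorm]

theorem norm_le_frobNorm (A : Matrix (Fin n) (Fin n) ℝ) : ‖A‖ ≤ frobNorm A := by
  refine (Matrix.norm_le_iff (frobNorm_nonneg A)).2 fun i j => ?_
  rw [Real.norm_eq_abs, frobNorm, ← Real.sqrt_sq_eq_abs]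
  refine Real.sqrt_le_sqrt ?_
  calc A i j ^ 2 = A i j * A i j := sq _
    _ ≤ ∑ j', A i j' * A i j' :=
      Finset.single_le_sum (f := fun j' => A i j' * A i j') (fun _ _ => mul_self_nonneg _)
        (Finset.mem_univ j)
    _ ≤ frobInner A A :=
      Finset.single_le_sum (f := fun i' => ∑ j', A i' j' * A i' j')
        (fun _ _ => Finset.sum_nonneg fun _ _ => mul_self_nonneg _) (Finset.mem_univ i)

theorem frobNorm_le_mul_norm (A : Matrix (Fin n) (Fin n) ℝ) : frobNorm A ≤ n * ‖A‖ := by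
  have hentry : ∀ i j, A i j * A i j ≤ ‖A‖ ^ 2 := fun i j => by
    rw [← abs_mul_abs_self, sq]
    have := Matrix.norm_entry_le_entrywise_sup_norm A (i := i) (j := j)
    rw [Real.norm_eq_abs] at this
    exact mul_self_le_mul_self (abs_nonneg _) this
  calc frobNorm A ≤ Real.sqrt (∑ _i : Fin n, ∑ _j : Fin n, ‖A‖ ^ 2) :=
        Real.sqrt_le_sqrt (Finset.sum_le_sum fun i _ => Finset.sum_le_sum fun j _ => hentry i j)
    _ = n * ‖A‖ := by
        simp only [Finset.sum_const, Finset.card_univ, Fintype.card_fin, nsmul_eq_mul]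
        rw [show (n : ℝ) * (n * ‖A‖ ^ 2) = (n * ‖A‖) ^ 2 by ring, Real.sqrt_sq (by positivity)]

theorem norm_mul_le_mul_norm (A B : Matrix (Fin n) (Fin n) ℝ) : ‖A * B‖ ≤ n * (‖A‖ * ‖B‖) := by
  refine (Matrix.norm_le_iff (by positivity)).2 fun i j => ?_
  calc ‖(A * B) i j‖ ≤ ∑ l, ‖A i l * B l j‖ := by rw [Matrix.mul_apply]; exact norm_sum_le _ _
    _ ≤ ∑ _l : Fin n, ‖A‖ * ‖B‖ := Finset.sum_le_sum fun l _ => by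
        rw [norm_mul]
        exact mul_le_mul (Matrix.norm_entry_le_entrywise_sup_norm A)
          (Matrix.norm_entry_le_entrywise_sup_norm B) (norm_nonneg _) (norm_nonneg _)
    _ = n * (‖A‖ * ‖B‖) := by simp

theorem norm_one_le_one : ‖(1 : Matrix (Fin n) (Fin n) ℝ)‖ ≤ 1 :=
  (Matrix.norm_le_iff zero_le_one).2 fun i j => by rw [one_apply]; split_ifs <;> simp

end MatrixNorms

theorem measurable_frobNorm {α : Type*} [MeasurableSpace α] {n : ℕ}
    {G : α → Matrix (Fin n) (Fin n) ℝ} (hG : ∀ i j, Measurable fun x => G x i j) :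
    Measurable fun x => frobNorm (G x) := by
  unfold frobNorm frobInner
  fun_prop

theorem fderiv_apply_isBigO_sub {𝕜 E F : Type*} [NontriviallyNormedField 𝕜]
    [NormedAddCommGroup E] [NormedSpace 𝕜 E] [NormedAddCommGroup F] [NormedSpace 𝕜 F]
    {f : E → F} {a : E} (hf : ContDiffAt 𝕜 2 f a) (ha : fderiv 𝕜 f a = 0) (v : E) :
    (fun x => fderiv 𝕜 f x v) =O[𝓝 a] fun x => x - a := by
  have hd : DifferentiableAt 𝕜 (fderiv 𝕜 f) a :=
    (hf.fderiv_right (m := 1) le_rfl).differentiableAt one_ne_zero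
  have := hd.hasFDerivAt.isBigO_sub
  simp only [ha, sub_zero] at this
  exact ((ContinuousLinearMap.apply 𝕜 F v).isBigO_comp _ _).trans this

theorem matGrad_isBigO_sub {w : Matrix (Fin 3) (Fin 3) ℝ → ℝ} {a : Matrix (Fin 3) (Fin 3) ℝ}
    (hw : ContDiffAt ℝ 2 w a) (ha : fderiv ℝ w a = 0) :
    matGrad w =O[𝓝 a] fun F => F - a :=
  Asymptotics.isBigO_pi.2 fun _ => Asymptotics.isBigO_pi.2 fun _ =>
    fderiv_apply_isBigO_sub hw ha _

theorem distSO3_le_frobNorm_sub_one (F : Matrix (Fin 3) (Fin 3) ℝ) :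
    distSO3 F ≤ frobNorm (F - 1) :=
  csInf_le ⟨0, by rintro _ ⟨R, -, rfl⟩; exact frobNorm_nonneg _⟩ ⟨1, ⟨by simp, det_one⟩, rfl⟩

theorem setOf_distSO3_lt_mem_nhds_one {δ : ℝ} (hδ : 0 < δ) :
    {F : Matrix (Fin 3) (Fin 3) ℝ | distSO3 F < δ} ∈ 𝓝 1 := by
  refine Metric.mem_nhds_iff.2 ⟨δ / 3, by positivity, fun F hF => ?_⟩
  rw [Metric.mem_ball, dist_eq_norm] at hF
  calc distSO3 F ≤ frobNorm (F - 1) := distSO3_le_frobNorm_sub_one F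
    _ ≤ 3 * ‖F - 1‖ := by exact_mod_cast frobNorm_le_mul_norm (F - 1)
    _ < δ := by linarith

theorem exists_norm_matGrad_le {W : Matrix (Fin 3) (Fin 3) ℝ → ℝ≥0∞} {δ : ℝ} (hδ : 0 < δ)
    (hWId : W 1 = 0)
    (hC2 : ContDiffOn ℝ 2 (wr W) {F : Matrix (Fin 3) (Fin 3) ℝ | distSO3 F < δ}) :
    ∃ c > 0, ∃ ρ > 0, ρ ≤ 1 ∧
      ∀ F : Matrix (Fin 3) (Fin 3) ℝ, ‖F - 1‖ ≤ ρ → ‖matGrad (wr W) F‖ ≤ c * ‖F - 1‖ := by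
  have hmin : IsLocalMin (wr W) 1 :=
    Eventually.of_forall fun F => by simp only [wr, hWId, ENNReal.toReal_zero]; positivity
  obtain ⟨c, hc, hbig⟩ := (matGrad_isBigO_sub (hC2.contDiffAt (setOf_distSO3_lt_mem_nhds_one hδ))
    hmin.fderiv_eq_zero).exists_pos
  obtain ⟨ρ, hρ, hball⟩ := Metric.nhds_basis_closedBall.eventually_iff.1 hbig.bound
  refine ⟨c, hc, min ρ 1, by positivity, min_le_right _ _, fun F hF => hball ?_⟩
  rw [Metric.mem_closedBall, dist_eq_norm]
  exact hF.trans (min_le_left _ _)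

/-- `E_h` of the paper is `rescaledStress (wr W) t_h (Id + t_h G_h)`. -/
def rescaledStress (w : Matrix (Fin 3) (Fin 3) ℝ → ℝ) (t : ℝ) (F : Matrix (Fin 3) (Fin 3) ℝ) :
    Matrix (Fin 3) (Fin 3) ℝ :=
  t⁻¹ • (matGrad w F * Fᵀ)

theorem frobNorm_rescaledStress_le_of_near {w : Matrix (Fin 3) (Fin 3) ℝ → ℝ} {c ρ t : ℝ}
    (hc : 0 ≤ c) (hρ1 : ρ ≤ 1)
    (hw : ∀ F : Matrix (Fin 3) (Fin 3) ℝ, ‖F - 1‖ ≤ ρ → ‖matGrad w F‖ ≤ c * ‖F - 1‖)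
    (ht : 0 < t) {A : Matrix (Fin 3) (Fin 3) ℝ} (hA : t * frobNorm A ≤ ρ) :
    frobNorm (rescaledStress w t (1 + t • A)) ≤ 18 * c * frobNorm A := by
  set F := 1 + t • A
  have hF1 : ‖F - 1‖ ≤ t * frobNorm A := by
    rw [add_sub_cancel_left, norm_smul, Real.norm_of_nonneg ht.le]
    exact mul_le_mul_of_nonneg_left (norm_le_frobNorm A) ht.le
  have hgrad : ‖matGrad w F‖ ≤ c * (t * frobNorm A) :=
    (hw F (hF1.trans hA)).trans (mul_le_mul_of_nonneg_left hF1 hc)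
  have hF : ‖Fᵀ‖ ≤ 2 := by
    rw [norm_transpose]
    calc ‖F‖ ≤ ‖(1 : Matrix (Fin 3) (Fin 3) ℝ)‖ + ‖F - 1‖ := norm_le_insert' F 1
      _ ≤ 1 + 1 := add_le_add norm_one_le_one (by linarith)
      _ = 2 := by norm_num
  rw [rescaledStress, frobNorm_smul, abs_of_pos (inv_pos.2 ht), inv_mul_le_iff₀ ht]
  calc frobNorm (matGrad w F * Fᵀ) ≤ 3 * ‖matGrad w F * Fᵀ‖ := by
        exact_mod_cast frobNorm_le_mul_norm _
    _ ≤ 3 * (3 * (‖matGrad w F‖ * ‖Fᵀ‖)) := by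
        gcongr; exact_mod_cast norm_mul_le_mul_norm _ _
    _ ≤ 3 * (3 * (c * (t * frobNorm A) * 2)) := by
        gcongr; exact (norm_nonneg _).trans hgrad
    _ = t * (18 * c * frobNorm A) := by ring

section Integrals

variable {α : Type*} [MeasurableSpace α] {μ : Measure α}

theorem measure_lt_mul_le_of_lintegral_sq_le {g : α → ℝ} (hg : Measurable g) {s t K : ℝ}
    (hs : 0 < s) (hK : ∫⁻ x, ENNReal.ofReal (g x ^ 2) ∂μ ≤ ENNReal.ofReal K) :
    μ {x | s < t * g x} ≤ ENNReal.ofReal (K * (t / s) ^ 2) := by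
  have hA : MeasurableSet {x | s < t * g x} := measurableSet_lt measurable_const (hg.const_mul t)
  calc μ {x | s < t * g x} = ∫⁻ _ in {x | s < t * g x}, 1 ∂μ := (setLIntegral_one _).symm
    _ ≤ ∫⁻ x in {x | s < t * g x}, ENNReal.ofReal ((t / s) ^ 2) * ENNReal.ofReal (g x ^ 2) ∂μ :=
        setLIntegral_mono' hA fun x (hx : s < t * g x) => by
          rw [← ENNReal.ofReal_mul (by positivity), ← ENNReal.ofReal_one]
          refine ENNReal.ofReal_le_ofReal ?_
          have : 1 < t * g x / s := (one_lt_div hs).2 hx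
          calc (1 : ℝ) ≤ (t * g x / s) ^ 2 := one_le_pow₀ this.le
            _ = (t / s) ^ 2 * g x ^ 2 := by ring
    _ ≤ ∫⁻ x, ENNReal.ofReal ((t / s) ^ 2) * ENNReal.ofReal (g x ^ 2) ∂μ :=
        setLIntegral_le_lintegral _ _
    _ = ENNReal.ofReal ((t / s) ^ 2) * ∫⁻ x, ENNReal.ofReal (g x ^ 2) ∂μ :=
        lintegral_const_mul' _ _ ENNReal.ofReal_ne_top
    _ ≤ ENNReal.ofReal ((t / s) ^ 2) * ENNReal.ofReal K := by gcongr
    _ = ENNReal.ofReal (K * (t / s) ^ 2) := by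
        rw [← ENNReal.ofReal_mul (by positivity), mul_comm]

variable {G : α → Matrix (Fin 3) (Fin 3) ℝ} {t s K : ℝ}

theorem lintegral_rescaledStress_near_le {w : Matrix (Fin 3) (Fin 3) ℝ → ℝ} {c ρ : ℝ}
    (hc : 0 ≤ c) (hρ1 : ρ ≤ 1)
    (hw : ∀ F : Matrix (Fin 3) (Fin 3) ℝ, ‖F - 1‖ ≤ ρ → ‖matGrad w F‖ ≤ c * ‖F - 1‖)
    (hG : Measurable fun x => frobNorm (G x)) (ht : 0 < t) (hs : 0 < s)
    (hL2 : ∫⁻ x, ENNReal.ofReal (frobNorm (G x) ^ 2) ∂μ ≤ ENNReal.ofReal K) :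
    ∫⁻ x in {x | s < t * frobNorm (G x)} ∩ {x | t * frobNorm (G x) ≤ ρ},
        ENNReal.ofReal (frobNorm (rescaledStress w t (1 + t • G x))) ∂μ
      ≤ ENNReal.ofReal (18 * c * K * (t / s)) := by
  have hmeas : MeasurableSet ({x | s < t * frobNorm (G x)} ∩ {x | t * frobNorm (G x) ≤ ρ}) :=
    (measurableSet_lt measurable_const (hG.const_mul t)).inter
      (measurableSet_le (hG.const_mul t) measurable_const)
  have hcoef : 0 ≤ 18 * c * (t / s) := by positivity
  calc ∫⁻ x in {x | s < t * frobNorm (G x)} ∩ {x | t * frobNorm (G x) ≤ ρ},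
        ENNReal.ofReal (frobNorm (rescaledStress w t (1 + t • G x))) ∂μ
      ≤ ∫⁻ x in {x | s < t * frobNorm (G x)} ∩ {x | t * frobNorm (G x) ≤ ρ},
        ENNReal.ofReal (18 * c * (t / s)) * ENNReal.ofReal (frobNorm (G x) ^ 2) ∂μ :=
        setLIntegral_mono' hmeas fun x ⟨(hsx : s < _), (hρx : _ ≤ ρ)⟩ => by
          rw [← ENNReal.ofReal_mul hcoef]
          refine ENNReal.ofReal_le_ofReal ?_
          have hGx := frobNorm_nonneg (G x)
          calc frobNorm (rescaledStress w t (1 + t • G x)) ≤ 18 * c * frobNorm (G x) :=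
                frobNorm_rescaledStress_le_of_near hc hρ1 hw ht hρx
            _ ≤ 18 * c * (t / s * frobNorm (G x) ^ 2) := by
                gcongr
                rw [div_mul_eq_mul_div, le_div_iff₀ hs]
                nlinarith
            _ = 18 * c * (t / s) * frobNorm (G x) ^ 2 := by ring
    _ ≤ ∫⁻ x, ENNReal.ofReal (18 * c * (t / s)) * ENNReal.ofReal (frobNorm (G x) ^ 2) ∂μ :=
        setLIntegral_le_lintegral _ _
    _ = ENNReal.ofReal (18 * c * (t / s)) * ∫⁻ x, ENNReal.ofReal (frobNorm (G x) ^ 2) ∂μ :=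
        lintegral_const_mul' _ _ ENNReal.ofReal_ne_top
    _ ≤ ENNReal.ofReal (18 * c * (t / s)) * ENNReal.ofReal K := by gcongr
    _ = ENNReal.ofReal (18 * c * K * (t / s)) := by
        rw [← ENNReal.ofReal_mul hcoef]; ring_nf

theorem lintegral_rescaledStress_far_le {W : Matrix (Fin 3) (Fin 3) ℝ → ℝ≥0∞} {k ρ M : ℝ}
    (hk : 0 ≤ k) (hρ : 0 < ρ) (hM : 0 ≤ M) (hK : 0 ≤ K)
    (hfin : ∀ F : Matrix (Fin 3) (Fin 3) ℝ, 0 < F.det → W F ≠ ⊤)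
    (hgrowth : ∀ F : Matrix (Fin 3) (Fin 3) ℝ, 0 < F.det →
      frobNorm (matGrad (wr W) F * Fᵀ) ≤ k * (wr W F + 1))
    (hG : Measurable fun x => frobNorm (G x)) (ht : 0 < t)
    (hdet : ∀ᵐ x ∂μ, 0 < (1 + t • G x).det)
    (hL2 : ∫⁻ x, ENNReal.ofReal (frobNorm (G x) ^ 2) ∂μ ≤ ENNReal.ofReal K)
    (hEn : ∫⁻ x, W (1 + t • G x) ∂μ ≤ ENNReal.ofReal (M * t ^ 2)) :
    ∫⁻ x in {x | ρ < t * frobNorm (G x)},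
        ENNReal.ofReal (frobNorm (rescaledStress (wr W) t (1 + t • G x))) ∂μ
      ≤ ENNReal.ofReal (k * (M + K / ρ ^ 2) * t) := by
  have hpt : ∀ᵐ x ∂μ, ENNReal.ofReal (frobNorm (rescaledStress (wr W) t (1 + t • G x)))
      ≤ ENNReal.ofReal (k / t) * (W (1 + t • G x) + 1) := by
    filter_upwards [hdet] with x hx
    set F := 1 + t • G x
    rw [← ENNReal.ofReal_toReal (hfin F hx), ← ENNReal.ofReal_one,
      ← ENNReal.ofReal_add ENNReal.toReal_nonneg zero_le_one, ← ENNReal.ofReal_mul (by positivity),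
      rescaledStress, frobNorm_smul, abs_of_pos (inv_pos.2 ht)]
    refine ENNReal.ofReal_le_ofReal ?_
    calc t⁻¹ * frobNorm (matGrad (wr W) F * Fᵀ) ≤ t⁻¹ * (k * (wr W F + 1)) := by
          gcongr; exact hgrowth F hx
      _ = k / t * ((W F).toReal + 1) := by rw [wr]; ring
  calc ∫⁻ x in {x | ρ < t * frobNorm (G x)},
        ENNReal.ofReal (frobNorm (rescaledStress (wr W) t (1 + t • G x))) ∂μ
      ≤ ∫⁻ x in {x | ρ < t * frobNorm (G x)}, ENNReal.ofReal (k / t) * (W (1 + t • G x) + 1) ∂μ :=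
        lintegral_mono_ae (ae_restrict_of_ae hpt)
    _ = ENNReal.ofReal (k / t) *
          (∫⁻ x in {x | ρ < t * frobNorm (G x)}, W (1 + t • G x) ∂μ
            + μ {x | ρ < t * frobNorm (G x)}) := by
        rw [lintegral_const_mul' _ _ ENNReal.ofReal_ne_top,
          lintegral_add_right _ measurable_const, setLIntegral_one]
    _ ≤ ENNReal.ofReal (k / t) * (ENNReal.ofReal (M * t ^ 2) + ENNReal.ofReal (K * (t / ρ) ^ 2)) := by
        gcongr
        · exact (setLIntegral_le_lintegral _ _).trans hEn
        · exact measure_lt_mul_le_of_lintegral_sq_le hG hρ hL2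
    _ = ENNReal.ofReal (k * (M + K / ρ ^ 2) * t) := by
        rw [← ENNReal.ofReal_add (by positivity) (by positivity), ← ENNReal.ofReal_mul (by positivity)]
        congr 1
        field_simp

theorem lintegral_rescaledStress_le {W : Matrix (Fin 3) (Fin 3) ℝ → ℝ≥0∞} {k c ρ M : ℝ}
    (hk : 0 ≤ k) (hc : 0 ≤ c) (hρ : 0 < ρ) (hρ1 : ρ ≤ 1) (hM : 0 ≤ M) (hK : 0 ≤ K)
    (hfin : ∀ F : Matrix (Fin 3) (Fin 3) ℝ, 0 < F.det → W F ≠ ⊤)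
    (hgrowth : ∀ F : Matrix (Fin 3) (Fin 3) ℝ, 0 < F.det →
      frobNorm (matGrad (wr W) F * Fᵀ) ≤ k * (wr W F + 1))
    (hw : ∀ F : Matrix (Fin 3) (Fin 3) ℝ, ‖F - 1‖ ≤ ρ → ‖matGrad (wr W) F‖ ≤ c * ‖F - 1‖)
    (hG : Measurable fun x => frobNorm (G x)) (ht : 0 < t) (hs : 0 < s) (hs1 : s ≤ 1)
    (hdet : ∀ᵐ x ∂μ, 0 < (1 + t • G x).det)
    (hL2 : ∫⁻ x, ENNReal.ofReal (frobNorm (G x) ^ 2) ∂μ ≤ ENNReal.ofReal K)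
    (hEn : ∫⁻ x, W (1 + t • G x) ∂μ ≤ ENNReal.ofReal (M * t ^ 2)) :
    ∫⁻ x in {x | s < t * frobNorm (G x)},
        ENNReal.ofReal (frobNorm (rescaledStress (wr W) t (1 + t • G x))) ∂μ
      ≤ ENNReal.ofReal ((18 * c * K + k * (M + K / ρ ^ 2)) * (t / s)) := by
  have hsplit : {x | s < t * frobNorm (G x)} ⊆
      ({x | s < t * frobNorm (G x)} ∩ {x | t * frobNorm (G x) ≤ ρ}) ∪
        {x | ρ < t * frobNorm (G x)} :=
    fun x hx => (le_or_gt (t * frobNorm (G x)) ρ).imp (fun hρx => ⟨hx, hρx⟩) id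
  have hts : t ≤ t / s := le_div_self ht.le hs hs1
  calc _ ≤ _ := lintegral_mono_set hsplit
    _ ≤ _ := lintegral_union_le _ _ _
    _ ≤ ENNReal.ofReal (18 * c * K * (t / s)) + ENNReal.ofReal (k * (M + K / ρ ^ 2) * t) :=
        add_le_add (lintegral_rescaledStress_near_le hc hρ1 hw hG ht hs hL2)
          (lintegral_rescaledStress_far_le hk hρ hM hK hfin hgrowth hG ht hdet hL2 hEn)
    _ ≤ ENNReal.ofReal (18 * c * K * (t / s)) + ENNReal.ofReal (k * (M + K / ρ ^ 2) * (t / s)) := by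
        gcongr
    _ = ENNReal.ofReal ((18 * c * K + k * (M + K / ρ ^ 2)) * (t / s)) := by
        rw [← ENNReal.ofReal_add (by positivity) (by positivity)]
        ring_nf

end Integrals

theorem statement4_general (Ω : Set (Fin 3 → ℝ))
    (M : ℝ) (hM : 0 < M)
    (W : Matrix (Fin 3) (Fin 3) ℝ → ℝ≥0∞) (δ k : ℝ) (hδ : 0 < δ) (hk : 0 < k)
    (hfin : ∀ F : Matrix (Fin 3) (Fin 3) ℝ, 0 < F.det → W F ≠ ⊤)
    (hWId : W 1 = 0)
    (hC2 : ContDiffOn ℝ 2 (wr W) {F : Matrix (Fin 3) (Fin 3) ℝ | distSO3 F < δ})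
    (hgrowth : ∀ F : Matrix (Fin 3) (Fin 3) ℝ, 0 < F.det →
      frobNorm (matGrad (wr W) F * Fᵀ) ≤ k * (wr W F + 1))
    (t s : ℕ → ℝ) (ht : ∀ h, t h ∈ Set.Ioc (0:ℝ) 1) (hs : ∀ h, s h ∈ Set.Ioc (0:ℝ) 1)
    (hts : Tendsto (fun h => t h / s h) atTop (𝓝 0))
    (G : ℕ → (Fin 3 → ℝ) → Matrix (Fin 3) (Fin 3) ℝ)
    (hGmeas : ∀ h, ∀ i j, Measurable fun x => G h x i j)
    (hdet : ∀ h, ∀ᵐ x ∂volume.restrict Ω, 0 < (1 + t h • G h x).det)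
    (hL2 : ∀ h, ∫⁻ x in Ω, ENNReal.ofReal (frobNorm (G h x) ^ 2) ≤ ENNReal.ofReal (M ^ 2))
    (hEn : ∀ h, ∫⁻ x in Ω, W (1 + t h • G h x) ≤ ENNReal.ofReal (M * t h ^ 2)) :
    (∀ h, volume (Ω \ {x ∈ Ω | t h * frobNorm (G h x) ≤ s h}) ≤
        ENNReal.ofReal (M ^ 2 * (t h / s h) ^ 2)) ∧
    (∃ C > (0:ℝ), ∀ h,
      ∫⁻ x in Ω \ {x ∈ Ω | t h * frobNorm (G h x) ≤ s h},
          ENNReal.ofReal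
            (frobNorm ((t h)⁻¹ • (matGrad (wr W) (1 + t h • G h x) * (1 + t h • G h x)ᵀ)))
        ≤ ENNReal.ofReal (C * (t h / s h))) ∧
    Tendsto (fun h =>
        ∫⁻ x in Ω \ {x ∈ Ω | t h * frobNorm (G h x) ≤ s h},
          ENNReal.ofReal
            (frobNorm ((t h)⁻¹ • (matGrad (wr W) (1 + t h • G h x) * (1 + t h • G h x)ᵀ))))
      atTop (𝓝 0) := by
  obtain ⟨c, hc, ρ, hρ, hρ1, hw⟩ := exists_norm_matGrad_le hδ hWId hC2
  set C := 18 * c * M ^ 2 + k * (M + M ^ 2 / ρ ^ 2)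
  have hGm h : Measurable fun x => frobNorm (G h x) := measurable_frobNorm (hGmeas h)
  have hBm h : MeasurableSet {x | s h < t h * frobNorm (G h x)} :=
    measurableSet_lt measurable_const ((hGm h).const_mul _)
  have hB h : Ω \ {x ∈ Ω | t h * frobNorm (G h x) ≤ s h} =
      {x | s h < t h * frobNorm (G h x)} ∩ Ω := by
    ext x
    simp only [Set.mem_sdiff, Set.mem_ofPred_eq, Set.mem_inter_iff, not_and, not_le]
    tauto
  have hbound h : ∫⁻ x in Ω \ {x ∈ Ω | t h * frobNorm (G h x) ≤ s h},
      ENNReal.ofReal (frobNorm (rescaledStress (wr W) (t h) (1 + t h • G h x)))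
        ≤ ENNReal.ofReal (C * (t h / s h)) := by
    rw [hB, ← Measure.restrict_restrict (hBm h)]
    exact lintegral_rescaledStress_le hk.le hc.le hρ hρ1 hM.le (sq_nonneg M) hfin hgrowth hw
      (hGm h) (ht h).1 (hs h).1 (hs h).2 (hdet h) (hL2 h) (hEn h)
  refine ⟨fun h => ?_, ⟨C, by positivity, hbound⟩, ?_⟩
  · rw [hB, ← Measure.restrict_apply (hBm h)]
    exact measure_lt_mul_le_of_lintegral_sq_le (hGm h) (hs h).1 (hL2 h)
  · have hC0 := ENNReal.tendsto_ofReal (hts.const_mul C)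
    rw [mul_zero, ENNReal.ofReal_zero] at hC0
    exact tendsto_of_tendsto_of_tendsto_of_le_of_le tendsto_const_nhds hC0 (fun _ => zero_le)
      hbound

/-- estimate of `|Ω \ B_h|` and smallness of the stress on `Ω \ B_h`,
yielding strong `L¹` convergence to 0 of `(1 - χ_h) E_h`. -/
theorem statement4 (Ω : Set (Fin 3 → ℝ)) (hΩm : MeasurableSet Ω) (hΩfin : volume Ω < ⊤)
    (M : ℝ) (hM : 0 < M)
    (W : Matrix (Fin 3) (Fin 3) ℝ → ℝ≥0∞) (δ k : ℝ) (hδ : 0 < δ) (hk : 0 < k)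
    (hfin : ∀ F : Matrix (Fin 3) (Fin 3) ℝ, 0 < F.det → W F ≠ ⊤)
    (hC1 : ContDiffOn ℝ 1 (wr W) {F : Matrix (Fin 3) (Fin 3) ℝ | 0 < F.det})
    (hWId : W 1 = 0)
    (hfinδ : ∀ F : Matrix (Fin 3) (Fin 3) ℝ, distSO3 F < δ → W F ≠ ⊤)
    (hC2 : ContDiffOn ℝ 2 (wr W) {F : Matrix (Fin 3) (Fin 3) ℝ | distSO3 F < δ})
    (hgrowth : ∀ F : Matrix (Fin 3) (Fin 3) ℝ, 0 < F.det →
      frobNorm (matGrad (wr W) F * Fᵀ) ≤ k * (wr W F + 1))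
    (t s : ℕ → ℝ) (ht : ∀ h, t h ∈ Set.Ioc (0:ℝ) 1) (hs : ∀ h, s h ∈ Set.Ioc (0:ℝ) 1)
    (ht0 : Tendsto t atTop (𝓝 0)) (hts : Tendsto (fun h => t h / s h) atTop (𝓝 0))
    (G : ℕ → (Fin 3 → ℝ) → Matrix (Fin 3) (Fin 3) ℝ)
    (hGmeas : ∀ h, ∀ i j, Measurable fun x => G h x i j)
    (hdet : ∀ h, ∀ᵐ x ∂volume.restrict Ω, 0 < (1 + t h • G h x).det)
    (hL2 : ∀ h, ∫⁻ x in Ω, ENNReal.ofReal (frobNorm (G h x) ^ 2) ≤ ENNReal.ofReal (M ^ 2))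
    (hEn : ∀ h, ∫⁻ x in Ω, W (1 + t h • G h x) ≤ ENNReal.ofReal (M * t h ^ 2)) :
    (∀ h, volume (Ω \ {x ∈ Ω | t h * frobNorm (G h x) ≤ s h}) ≤
        ENNReal.ofReal (M ^ 2 * (t h / s h) ^ 2)) ∧
    (∃ C > (0:ℝ), ∀ h,
      ∫⁻ x in Ω \ {x ∈ Ω | t h * frobNorm (G h x) ≤ s h},
          ENNReal.ofReal
            (frobNorm ((t h)⁻¹ • (matGrad (wr W) (1 + t h • G h x) * (1 + t h • G h x)ᵀ)))
        ≤ ENNReal.ofReal (C * (t h / s h))) ∧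
    Tendsto (fun h =>
        ∫⁻ x in Ω \ {x ∈ Ω | t h * frobNorm (G h x) ≤ s h},
          ENNReal.ofReal
            (frobNorm ((t h)⁻¹ • (matGrad (wr W) (1 + t h • G h x) * (1 + t h • G h x)ᵀ))))
      atTop (𝓝 0) :=
  statement4_general Ω M hM W δ k hδ hk hfin hWId hC2 hgrowth t s ht hs hts G hGmeas hdet hL2 hEn
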